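/- Let m ≥ 3, let K = {(i_1,i_2), (i_2,i_3), ..., (i_{ℓ-1},i_ℓ), (i_ℓ,i_1)} be a directed cycle on pairwise distinct vertices i_1,...,i_ℓ ∈ V with 1 < ℓ = |K| < m, and let U ⊊ K be any strict subset of K. Then the extended subtour elimination inequality ∑_{(i,j) ∈ K} z_{i,j} + ∑_{(i,j) ∈ U} y_{i,j} ≤ |K| - 1 is valid for the cycle clustering polytope CCP(n,m); equivalently, for every surjective map κ : V → ZMod m, it is impossible that for every arc (i,j) ∈ K either κ(j) = κ(i) + 1, or (i,j) ∈ U and κ(i) = κ(j). -/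

import Mathlib

/-!
If every arc of the cycle either stays in a cluster or moves one cluster forward, then going once
around the cycle the clusters advance by the number `s ≤ ℓ` of forward arcs, so `m ∣ s`. As `ℓ < m`,
no arc moves forward, hence every arc stays and lies in `U`, contradicting `U ≠ K`. At an incidence
vector each arc contributes at most `1` to the left-hand side, and `1` only if it moves forward or
stays within `U`; so some arc contributes `0`. The inequality is linear, so it passes to `CCP(n,m)`.
-/

open scoped BigOperators

noncomputable section

/-- Coordinate index set for the incidence vectors of cycle clusterings:
`x`-variables indexed by `(i,s)`, `y`-variables indexed by pairs `i < j`,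
and `z`-variables indexed by arcs `i ≠ j`. -/
abbrev CCIdx (n m : ℕ) : Type :=
  (Fin n × ZMod m) ⊕ {p : Fin n × Fin n // p.1 < p.2} ⊕ {p : Fin n × Fin n // p.1 ≠ p.2}

/-- Index of the variable `x_{i,s}`. -/
def xIdx {n m : ℕ} (i : Fin n) (s : ZMod m) : CCIdx n m := Sum.inl (i, s)

/-- Index of the variable `y_{i,j}` (with the convention `y_{i,j} = y_{j,i}`). -/
def yIdx {n m : ℕ} (i j : Fin n) (h : i ≠ j) : CCIdx n m :=
  if hij : i < j then Sum.inr (Sum.inl ⟨(i, j), hij⟩)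
  else Sum.inr (Sum.inl ⟨(j, i), lt_of_le_of_ne (not_lt.mp hij) h.symm⟩)

/-- Index of the variable `z_{i,j}`. -/
def zIdx {n m : ℕ} (i j : Fin n) (h : i ≠ j) : CCIdx n m := Sum.inr (Sum.inr ⟨(i, j), h⟩)

/-- Incidence vector of a clustering `κ : V → ZMod m`:
`x_{i,s} = 1` iff `κ i = s`, `y_{i,j} = 1` iff `κ i = κ j`,
`z_{i,j} = 1` iff `κ j = κ i + 1`. -/
def incVec {n m : ℕ} (κ : Fin n → ZMod m) : CCIdx n m → ℝ :=
  Sum.elim (fun p => if κ p.1 = p.2 then 1 else 0)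
    (Sum.elim (fun p => if κ p.val.1 = κ p.val.2 then 1 else 0)
      (fun p => if κ p.val.2 = κ p.val.1 + 1 then 1 else 0))

/-- The cycle clustering polytope `CCP(n,m)`: the convex hull of the incidence
vectors of all feasible clusterings, i.e. all surjective maps `κ : V → ZMod m`. -/
def CCP (n m : ℕ) : Set (CCIdx n m → ℝ) :=
  convexHull ℝ {v | ∃ κ : Fin n → ZMod m, Function.Surjective κ ∧ v = incVec κ}

/-- The `x_{i,s}`-coordinate of a point. -/
def Xc {n m : ℕ} (v : CCIdx n m → ℝ) (i : Fin n) (s : ZMod m) : ℝ := v (xIdx i s)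

/-- The `y_{i,j}`-coordinate of a point (junk value `0` on the diagonal). -/
def Yc {n m : ℕ} (v : CCIdx n m → ℝ) (i j : Fin n) : ℝ :=
  if h : i ≠ j then v (yIdx i j h) else 0

/-- The `z_{i,j}`-coordinate of a point (junk value `0` on the diagonal). -/
def Zc {n m : ℕ} (v : CCIdx n m → ℝ) (i j : Fin n) : ℝ :=
  if h : i ≠ j then v (zIdx i j h) else 0

/-- The dimension of (the affine hull of) `CCP(n,m)`. -/
def ccpDim (n m : ℕ) : ℕ :=
  Module.finrank ℝ (affineSpan ℝ (CCP n m)).direction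

open Finset

section ClosedWalk

variable {m : ℕ} {f : ℕ → ZMod m}

lemma eq_add_sum_forward_steps {k : ℕ} (hstep : ∀ t < k, f (t + 1) = f t + 1 ∨ f (t + 1) = f t) :
    f k = f 0 + ((∑ t ∈ range k, if f (t + 1) = f t + 1 then 1 else 0 : ℕ) : ZMod m) := by
  induction k with
  | zero => simp
  | succ k ih =>
    rw [sum_range_succ, Nat.cast_add, ← add_assoc,
      ← ih fun t ht => hstep t (Nat.lt_succ_of_lt ht)]
    rcases hstep k (Nat.lt_succ_self k) with h | h <;> simp [h]

lemma no_forward_step_of_closed {ℓ : ℕ} (hℓm : ℓ < m)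
    (hstep : ∀ t < ℓ, f (t + 1) = f t + 1 ∨ f (t + 1) = f t) (hclosed : f ℓ = f 0) :
    ∀ t < ℓ, f (t + 1) ≠ f t + 1 := by
  set s := ∑ t ∈ range ℓ, if f (t + 1) = f t + 1 then 1 else 0
  have hdvd : m ∣ s := by
    rw [← ZMod.natCast_eq_zero_iff, ← left_eq_add, ← eq_add_sum_forward_steps hstep, hclosed]
  have hs_le : s ≤ ℓ := by simpa [s, sum_boole] using card_filter_le (range ℓ) _
  have hs : s = 0 := Nat.eq_zero_of_dvd_of_lt hdvd (hs_le.trans_lt hℓm)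
  intro t ht hforward
  simpa [hforward] using (sum_eq_zero_iff.mp hs) t (mem_range.mpr ht)

end ClosedWalk

lemma not_forall_forward_or_stay_in {m ℓ : ℕ} (hℓm : ℓ < m) {U : Finset ℕ}
    (hU : U ⊂ range ℓ) (p : ℕ → ZMod m) :
    ¬ ∀ t < ℓ, p ((t + 1) % ℓ) = p t + 1 ∨ (t ∈ U ∧ p t = p ((t + 1) % ℓ)) := by
  intro H
  have hmod {t : ℕ} (ht : t < ℓ) : t % ℓ = t := Nat.mod_eq_of_lt ht
  have hnone := no_forward_step_of_closed (f := fun t => p (t % ℓ)) hℓm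
    (fun t ht => by
      simpa [hmod ht, eq_comm, and_iff_right_of_imp] using (H t ht).imp_right And.right)
    (by simp)
  refine not_subset_of_ssubset hU fun t ht => ?_
  have ht : t < ℓ := mem_range.mp ht
  exact ((H t ht).resolve_left (by simpa [hmod ht] using hnone t ht)).1

lemma sum_boole_le_card_sub_one {ι : Type*} {s : Finset ι} (P : ι → Prop) [DecidablePred P]
    (h : ¬ ∀ t ∈ s, P t) :
    (∑ t ∈ s, if P t then 1 else 0 : ℝ) ≤ #s - 1 := by
  obtain ⟨t, ht, hPt⟩ : ∃ t ∈ s, ¬ P t := by simpa using h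
  have hcard : #{t ∈ s | P t} < #s := card_lt_card (filter_ssubset.mpr ⟨t, ht, hPt⟩)
  rw [sum_boole, le_sub_iff_add_le]
  exact_mod_cast hcard

section Coordinates

variable {n m : ℕ}

lemma Yc_incVec (κ : Fin n → ZMod m) {i j : Fin n} (h : i ≠ j) :
    Yc (incVec κ) i j = if κ i = κ j then 1 else 0 := by
  rw [Yc, dif_pos h, yIdx]
  by_cases hij : i < j
  · rw [dif_pos hij]
    rfl
  · rw [dif_neg hij]
    exact if_congr eq_comm rfl rfl

lemma Zc_incVec (κ : Fin n → ZMod m) {i j : Fin n} (h : i ≠ j) :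
    Zc (incVec κ) i j = if κ j = κ i + 1 then 1 else 0 := by
  rw [Zc, dif_pos h]
  rfl

def yCoord (i j : Fin n) : (CCIdx n m → ℝ) →ₗ[ℝ] ℝ :=
  if h : i ≠ j then LinearMap.proj (yIdx i j h) else 0

def zCoord (i j : Fin n) : (CCIdx n m → ℝ) →ₗ[ℝ] ℝ :=
  if h : i ≠ j then LinearMap.proj (zIdx i j h) else 0

@[simp]
lemma yCoord_apply (i j : Fin n) (v : CCIdx n m → ℝ) : yCoord i j v = Yc v i j := by
  unfold yCoord Yc
  split_ifs <;> rfl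

@[simp]
lemma zCoord_apply (i j : Fin n) (v : CCIdx n m → ℝ) : zCoord i j v = Zc v i j := by
  unfold zCoord Zc
  split_ifs <;> rfl

lemma le_of_mem_CCP (φ : (CCIdx n m → ℝ) →ₗ[ℝ] ℝ) (b : ℝ)
    (h : ∀ κ : Fin n → ZMod m, Function.Surjective κ → φ (incVec κ) ≤ b) :
    ∀ v ∈ CCP n m, φ v ≤ b :=
  convexHull_min (by rintro _ ⟨κ, hκ, rfl⟩; exact h κ hκ) (convex_halfSpace_le φ.isLinear b)

lemma Zc_add_ite_Yc_incVec_le (hm : 1 < m) (κ : Fin n → ZMod m) (i j : Fin n) (u : Prop)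
    [Decidable u] :
    Zc (incVec κ) i j + (if u then Yc (incVec κ) i j else 0)
      ≤ if κ j = κ i + 1 ∨ (u ∧ κ i = κ j) then 1 else 0 := by
  have : Fact (1 < m) := ⟨hm⟩
  by_cases hij : i = j
  · simp only [Zc, Yc, hij, ne_eq, not_true_eq_false, dite_false, ite_self, add_zero]
    split_ifs <;> norm_num
  rw [Zc_incVec κ hij, Yc_incVec κ hij]
  by_cases hforward : κ j = κ i + 1
  · simp [hforward]
  · by_cases hu : u <;> by_cases hstay : κ i = κ j <;> simp [hforward, hu, hstay]

lemma subtour_sum_incVec_le {ℓ : ℕ} (hm : 1 < m) (c : ℕ → Fin n) {U : Finset ℕ}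
    (hU : U ⊆ range ℓ) (κ : Fin n → ZMod m)
    (h : ¬ ∀ t < ℓ, κ (c ((t + 1) % ℓ)) = κ (c t) + 1 ∨ (t ∈ U ∧ κ (c t) = κ (c ((t + 1) % ℓ)))) :
    ∑ t ∈ range ℓ, Zc (incVec κ) (c t) (c ((t + 1) % ℓ))
      + ∑ t ∈ U, Yc (incVec κ) (c t) (c ((t + 1) % ℓ)) ≤ (ℓ : ℝ) - 1 := by
  rw [← inter_eq_right.mpr hU, ← sum_ite_mem, ← sum_add_distrib]
  refine (sum_le_sum fun t _ => Zc_add_ite_Yc_incVec_le hm κ _ _ (t ∈ U)).trans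
    ((sum_boole_le_card_sub_one _ ?_).trans_eq (by rw [card_range]))
  simpa using h

end Coordinates

theorem extended_subtour_inequality_general (n m ℓ : ℕ)
    (hℓm : ℓ < m) (c : ℕ → Fin n)
    (U : Finset ℕ) (hU : U ⊂ Finset.range ℓ) :
    (∀ v ∈ CCP n m,
      ∑ t ∈ Finset.range ℓ, Zc v (c t) (c ((t + 1) % ℓ))
        + ∑ t ∈ U, Yc v (c t) (c ((t + 1) % ℓ)) ≤ (ℓ : ℝ) - 1) ∧
    (∀ κ : Fin n → ZMod m, Function.Surjective κ →
      ¬ (∀ t < ℓ, κ (c ((t + 1) % ℓ)) = κ (c t) + 1 ∨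
            (t ∈ U ∧ κ (c t) = κ (c ((t + 1) % ℓ))))) := by
  have hℓ : ℓ ≠ 0 := by simpa using (empty_subset U).trans_ssubset hU
  have hcycle (κ : Fin n → ZMod m) := not_forall_forward_or_stay_in hℓm hU fun t => κ (c t)
  have hvalid := le_of_mem_CCP (∑ t ∈ range ℓ, zCoord (c t) (c ((t + 1) % ℓ))
    + ∑ t ∈ U, yCoord (c t) (c ((t + 1) % ℓ))) (ℓ - 1)
    (fun κ _ => by simpa using subtour_sum_incVec_le (by omega) c hU.subset κ (hcycle κ))
  exact ⟨fun v hv => by simpa using hvalid v hv, fun κ _ => hcycle κ⟩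

/-- For `m ≥ 3`, a directed cycle `(c 0, c 1), …, (c (ℓ-1), c 0)` on pairwise
distinct vertices with `1 < ℓ < m`, and a strict subset `U` of its arcs
(encoded by its index set `U ⊂ {0, …, ℓ-1}`), the extended subtour elimination
inequality `∑_{(i,j)∈K} z_{i,j} + ∑_{(i,j)∈U} y_{i,j} ≤ |K| - 1` is valid for
`CCP(n,m)`; equivalently, for every surjective `κ : V → ZMod m` it is
impossible that for every arc `(i,j)` of the cycle either `κ j = κ i + 1`, or
the arc lies in `U` and `κ i = κ j`. -/
theorem extended_subtour_inequality (n m ℓ : ℕ) (hm : 3 ≤ m) (hℓ : 1 < ℓ)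
    (hℓm : ℓ < m) (c : ℕ → Fin n)
    (hinj : ∀ t₁ < ℓ, ∀ t₂ < ℓ, c t₁ = c t₂ → t₁ = t₂)
    (U : Finset ℕ) (hU : U ⊂ Finset.range ℓ) :
    (∀ v ∈ CCP n m,
      ∑ t ∈ Finset.range ℓ, Zc v (c t) (c ((t + 1) % ℓ))
        + ∑ t ∈ U, Yc v (c t) (c ((t + 1) % ℓ)) ≤ (ℓ : ℝ) - 1) ∧
    (∀ κ : Fin n → ZMod m, Function.Surjective κ →
      ¬ (∀ t < ℓ, κ (c ((t + 1) % ℓ)) = κ (c t) + 1 ∨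
            (t ∈ U ∧ κ (c t) = κ (c ((t + 1) % ℓ))))) :=
  extended_subtour_inequality_general n m ℓ hℓm c U hU
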